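/- Let T be a bounded self-adjoint operator on ℓ²(ℕ;ℂ), let z ∈ ℂ \ σ(T), and let f : ℕ → ℕ satisfy f(n) > n for all n. Then for every n ∈ ℕ and every y ∈ ℓ²(ℕ;ℂ) with P_n y = y, one has ‖P_{f(n)}(T − zI)y‖ ≥ (dist(z, σ(T)) − ‖(I − P_{f(n)}) T P_n‖) · ‖y‖. In particular, if ‖(I − P_{f(n)}) T P_n‖ < dist(z, σ(T)), then the map y ↦ P_{f(n)}(T − zI)y is injective on the range of P_n. -/

import Mathlib

open MeasureTheory Filter Topology

noncomputable section

/-- The Hilbert space `ℓ²(ℕ;ℂ)` of square-summable complex sequences. -/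
abbrev ℓ2 : Type := lp (fun _ : ℕ => ℂ) 2

/-- The canonical basis vectors `e_j`. -/
def eVec (j : ℕ) : ℓ2 := lp.single 2 j 1

/-- The span of the first `n` canonical basis vectors. -/
def spanFirst (n : ℕ) : Submodule ℂ ℓ2 := Submodule.span ℂ (eVec '' Set.Iio n)

instance (n : ℕ) : FiniteDimensional ℂ (spanFirst n) :=
  FiniteDimensional.span_of_finite ℂ ((Set.finite_Iio n).image eVec)

/-- `Pn n` is the orthogonal projection onto the span of the first `n` basis vectors. -/
def Pn (n : ℕ) : ℓ2 →L[ℂ] ℓ2 :=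
  (spanFirst n).subtypeL.comp ((spanFirst n).orthogonalProjectionOnto)

instance : Nontrivial ℓ2 := by
  refine ⟨eVec 0, 0, fun h => ?_⟩
  have : (eVec 0 : ℓ2) 0 = 0 := by rw [h]; rfl
  rw [eVec, lp.single_apply_self] at this
  exact one_ne_zero this

lemma Pn_eq_self_iff {n : ℕ} {y : ℓ2} : Pn n y = y ↔ y ∈ spanFirst n := by
  constructor
  · intro h
    rw [← h]
    exact ((spanFirst n).orthogonalProjectionOnto y).2
  · intro h
    have := Submodule.starProjection_eq_self_iff (K := spanFirst n) (v := y) |>.mpr h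
    exact this

lemma Pn_mono {n m : ℕ} (h : n ≤ m) {y : ℓ2} (hy : Pn n y = y) : Pn m y = y := by
  rw [Pn_eq_self_iff] at hy ⊢
  refine Submodule.span_mono (Set.image_mono ?_) hy
  exact Set.Iio_subset_Iio h

lemma norm_Pn_apply_le (n : ℕ) (x : ℓ2) : ‖Pn n x‖ ≤ ‖x‖ := by
  have := Submodule.orthogonalProjectionOnto_norm_le (spanFirst n)
  calc ‖Pn n x‖ = ‖(spanFirst n).orthogonalProjectionOnto x‖ := rfl
    _ ≤ ‖(spanFirst n).orthogonalProjectionOnto‖ * ‖x‖ :=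
        ((spanFirst n).orthogonalProjectionOnto).le_opNorm x
    _ ≤ ‖x‖ := mul_le_of_le_one_left (norm_nonneg x) this

/-- Resolvent bound for self-adjoint (hence normal) operators. -/
lemma resolvent_lower_bound (T : ℓ2 →L[ℂ] ℓ2) (hT : IsSelfAdjoint T)
    (z : ℂ) (hz : z ∉ spectrum ℂ T) (y : ℓ2) :
    Metric.infDist z (spectrum ℂ T) * ‖y‖ ≤ ‖(T - z • (1 : ℓ2 →L[ℂ] ℓ2)) y‖ := by
  have hnormal : IsStarNormal T := hT.isStarNormal
  set d : ℝ := Metric.infDist z (spectrum ℂ T) with hd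
  have hσne : (spectrum ℂ T).Nonempty := spectrum.nonempty T
  have hσclosed : IsClosed (spectrum ℂ T) := spectrum.isClosed T
  have hdpos : 0 < d := (hσclosed.notMem_iff_infDist_pos hσne).mp hz
  have hdist : ∀ t ∈ spectrum ℂ T, d ≤ ‖t - z‖ := by
    intro t ht
    have := Metric.infDist_le_dist_of_mem (x := z) ht
    rwa [dist_eq_norm, ← norm_neg, neg_sub] at this
  have hne : ∀ t ∈ spectrum ℂ T, t - z ≠ 0 := by
    intro t ht h0
    rw [sub_eq_zero] at h0
    exact hz (h0 ▸ ht)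
  -- the resolvent via continuous functional calculus
  set R : ℓ2 →L[ℂ] ℓ2 := cfc (fun t : ℂ => (t - z)⁻¹) T with hR
  have hcont : ContinuousOn (fun t : ℂ => (t - z)⁻¹) (spectrum ℂ T) := by
    apply ContinuousOn.inv₀ (by fun_prop)
    intro t ht; exact hne t ht
  have hcont2 : ContinuousOn (fun t : ℂ => t - z) (spectrum ℂ T) := by fun_prop
  have hmul : R * (T - z • (1 : ℓ2 →L[ℂ] ℓ2)) = 1 := by
    have h1 : cfc (fun t : ℂ => t - z) T = T - z • (1 : ℓ2 →L[ℂ] ℓ2) := by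
      rw [cfc_sub (fun t : ℂ => t) (fun _ : ℂ => z) T (by fun_prop) (by fun_prop),
        cfc_id' ℂ T, cfc_const z T, Algebra.algebraMap_eq_smul_one]
    rw [hR, ← h1, ← cfc_mul _ _ T hcont hcont2]
    have : cfc (fun t : ℂ => (t - z)⁻¹ * (t - z)) T = cfc (fun _ : ℂ => (1 : ℂ)) T := by
      apply cfc_congr
      intro t ht
      exact inv_mul_cancel₀ (hne t ht)
    rw [this, cfc_const_one ℂ T]
  have hRnorm : ‖R‖ ≤ d⁻¹ := by
    apply norm_cfc_le (by positivity)
    intro t ht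
    rw [norm_inv]
    exact inv_anti₀ hdpos (hdist t ht)
  have key : ‖y‖ ≤ d⁻¹ * ‖(T - z • (1 : ℓ2 →L[ℂ] ℓ2)) y‖ := by
    calc ‖y‖ = ‖(R * (T - z • (1 : ℓ2 →L[ℂ] ℓ2))) y‖ := by rw [hmul]; simp
      _ = ‖R ((T - z • (1 : ℓ2 →L[ℂ] ℓ2)) y)‖ := rfl
      _ ≤ ‖R‖ * ‖(T - z • (1 : ℓ2 →L[ℂ] ℓ2)) y‖ := R.le_opNorm _
      _ ≤ d⁻¹ * ‖(T - z • (1 : ℓ2 →L[ℂ] ℓ2)) y‖ := by gcongr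
  calc d * ‖y‖ ≤ d * (d⁻¹ * ‖(T - z • (1 : ℓ2 →L[ℂ] ℓ2)) y‖) := by gcongr
    _ = ‖(T - z • (1 : ℓ2 →L[ℂ] ℓ2)) y‖ := by
        rw [← mul_assoc, mul_inv_cancel₀ hdpos.ne', one_mul]

theorem stmt2 (T : ℓ2 →L[ℂ] ℓ2) (hT : IsSelfAdjoint T)
    (z : ℂ) (hz : z ∉ spectrum ℂ T)
    (f : ℕ → ℕ) (hf : ∀ n, n < f n) :
    (∀ n : ℕ, ∀ y : ℓ2, Pn n y = y →
      (Metric.infDist z (spectrum ℂ T) -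
          ‖((1 : ℓ2 →L[ℂ] ℓ2) - Pn (f n)).comp (T.comp (Pn n))‖) * ‖y‖ ≤
        ‖Pn (f n) ((T - z • (1 : ℓ2 →L[ℂ] ℓ2)) y)‖) ∧
    (∀ n : ℕ,
      ‖((1 : ℓ2 →L[ℂ] ℓ2) - Pn (f n)).comp (T.comp (Pn n))‖ <
          Metric.infDist z (spectrum ℂ T) →
        ∀ y₁ y₂ : ℓ2, Pn n y₁ = y₁ → Pn n y₂ = y₂ →
          Pn (f n) ((T - z • (1 : ℓ2 →L[ℂ] ℓ2)) y₁) =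
            Pn (f n) ((T - z • (1 : ℓ2 →L[ℂ] ℓ2)) y₂) → y₁ = y₂) := by
  have main : ∀ n : ℕ, ∀ y : ℓ2, Pn n y = y →
      (Metric.infDist z (spectrum ℂ T) -
          ‖((1 : ℓ2 →L[ℂ] ℓ2) - Pn (f n)).comp (T.comp (Pn n))‖) * ‖y‖ ≤
        ‖Pn (f n) ((T - z • (1 : ℓ2 →L[ℂ] ℓ2)) y)‖ := by
    intro n y hy
    set d : ℝ := Metric.infDist z (spectrum ℂ T)
    set E : ℓ2 →L[ℂ] ℓ2 := ((1 : ℓ2 →L[ℂ] ℓ2) - Pn (f n)).comp (T.comp (Pn n))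
    set A : ℓ2 →L[ℂ] ℓ2 := T - z • (1 : ℓ2 →L[ℂ] ℓ2)
    have hyf : Pn (f n) y = y := Pn_mono (hf n).le hy
    have hdecomp : Pn (f n) (A y) = A y - E y := by
      have hE : E y = T y - Pn (f n) (T y) := by
        simp only [E, ContinuousLinearMap.comp_apply, hy, ContinuousLinearMap.sub_apply,
          ContinuousLinearMap.one_apply]
      have hA : A y = T y - z • y := by
        simp [A, ContinuousLinearMap.sub_apply, ContinuousLinearMap.smul_apply]
      rw [hA, hE, map_sub, (Pn (f n)).map_smul, hyf]
      abel
    rw [hdecomp]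
    have h1 : d * ‖y‖ ≤ ‖A y‖ := resolvent_lower_bound T hT z hz y
    have h2 : ‖E y‖ ≤ ‖E‖ * ‖y‖ := E.le_opNorm y
    calc (d - ‖E‖) * ‖y‖ = d * ‖y‖ - ‖E‖ * ‖y‖ := by ring
      _ ≤ ‖A y‖ - ‖E y‖ := by
          have := norm_nonneg y
          gcongr
      _ ≤ ‖A y - E y‖ := norm_sub_norm_le _ _
  refine ⟨main, ?_⟩
  intro n hlt y₁ y₂ h₁ h₂ heq
  set A : ℓ2 →L[ℂ] ℓ2 := T - z • (1 : ℓ2 →L[ℂ] ℓ2)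
  have hsub : Pn n (y₁ - y₂) = y₁ - y₂ := by rw [map_sub, h₁, h₂]
  have h0 : Pn (f n) (A (y₁ - y₂)) = 0 := by
    rw [map_sub, map_sub, heq, sub_self]
  have := main n (y₁ - y₂) hsub
  rw [h0, norm_zero] at this
  have hpos : 0 < Metric.infDist z (spectrum ℂ T) -
      ‖((1 : ℓ2 →L[ℂ] ℓ2) - Pn (f n)).comp (T.comp (Pn n))‖ := by linarith
  have : ‖y₁ - y₂‖ ≤ 0 := by
    by_contra hcon
    push_neg at hcon
    nlinarith [norm_nonneg (y₁ - y₂)]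
  have : y₁ - y₂ = 0 := by
    rw [← norm_le_zero_iff]; exact this
  exact sub_eq_zero.mp this
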